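/- Fix an integer p ≥ 1 and H > 0. Let x_k, υ_k, x_{k+1} ∈ E, τ_k ∈ [0,1], set u_k = υ_k − x_k, y_k = x_k + τ_k u_k and r_k = ‖x_{k+1} − y_k‖, and let g be a subgradient of ψ at x_{k+1} such that: (a) ∇f(x_{k+1}) + g + H r_k^{p−1}(x_{k+1} − y_k) = 0, and (b) (τ − τ_k)⟨∇f(x_{k+1}) + g, u_k⟩ ≥ 0 for every τ ∈ [0,1]. Let A_k ≥ 0, B_k ∈ ℝ and Ψ_k : E → ℝ satisfy Ψ_k(x) ≥ A_k F(x_k) + B_k + (1/2)‖x − υ_k‖² for all x ∈ E. Set g_k = ‖∇f(x_{k+1}) + g‖, assume g_k > 0, let a_{k+1} > 0 satisfy a_{k+1}²/(A_k + a_{k+1}) = (1/H)^{1/p} g_k^{(1−p)/p}, set A_{k+1} = A_k + a_{k+1}, and define Ψ_{k+1}(x) = Ψ_k(x) + a_{k+1}(f(x_{k+1}) + ⟨∇f(x_{k+1}), x − x_{k+1}⟩ + ψ(x)). Then for every x ∈ E, Ψ_{k+1}(x) ≥ A_{k+1} F(x_{k+1}) + B_k + (1/2)(1/H)^{1/p}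 A_{k+1} g_k^{(p+1)/p}. -/

import Mathlib

/-!
Write `s = ∇f(x_{k+1}) + g` and `r = ‖x_{k+1} - y_k‖`. Condition (a) says
`s = -H r^{p-1} (x_{k+1} - y_k)`, so `s` points along `y_k - x_{k+1}`, `‖s‖ = H r^p` and
`⟪s, y_k - x_{k+1}⟫ = ‖s‖ r = (1/H)^{1/p} ‖s‖^{(p+1)/p} =: κ`.
Convexity bounds both `F(x_k)` and the new linear model by `F(x_{k+1}) + ⟪s, · - x_{k+1}⟫`.
Splitting the inner products at `y_k`, condition (b) at `τ = 0` and `τ = 1` makes the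
`u_k`-terms nonnegative, which leaves `(A_k + a_{k+1}) κ`. Completing the square gives
`a ⟪s, x - υ_k⟫ + ½‖x - υ_k‖² ≥ -½ a² ‖s‖²`, and the choice of `a_{k+1}` makes the right-hand
side `-½ (A_k + a_{k+1}) κ`.
-/

open scoped RealInnerProductSpace

theorem ConvexOn.add_fderiv_sub_le {F : Type*} [NormedAddCommGroup F] [NormedSpace ℝ F]
    {S : Set F} {f : F → ℝ} {f' : F →L[ℝ] ℝ} {x y : F} (hf : ConvexOn ℝ S f)
    (hx : x ∈ S) (hy : y ∈ S) (hd : HasFDerivAt f f' x) :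
    f x + f' (y - x) ≤ f y := by
  set ℓ : ℝ →ᵃ[ℝ] F := AffineMap.lineMap x y
  have hline : ConvexOn ℝ (ℓ ⁻¹' S) (f ∘ ℓ) := hf.comp_affineMap ℓ
  have hderiv : HasDerivAt (f ∘ ℓ) (f' (y - x)) 0 :=
    (by simpa [ℓ] using hd : HasFDerivAt f f' (ℓ 0)).comp_hasDerivAt 0
      AffineMap.hasDerivAt_lineMap
  have hslope := hline.le_slope_of_hasDerivAt (by simpa [ℓ] using hx) (by simpa [ℓ] using hy)
    one_pos hderiv
  simp only [slope_def_field, Function.comp_apply, ℓ, AffineMap.lineMap_apply_zero,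
    AffineMap.lineMap_apply_one, sub_zero, div_one] at hslope
  linarith

theorem one_div_rpow_mul_rpow_eq {H r : ℝ} (hH : 0 < H) (hr : 0 ≤ r) {p : ℕ} (hp : p ≠ 0) :
    (1 / H) ^ ((1 : ℝ) / p) * (H * r ^ p) ^ (((p : ℝ) + 1) / p) = H * r ^ p * r := by
  have hp' : (p : ℝ) ≠ 0 := by exact_mod_cast hp
  have hH' : (1 / H) ^ ((1 : ℝ) / p) * H ^ (((p : ℝ) + 1) / p) = H := by
    rw [one_div, Real.inv_rpow hH.le, ← Real.rpow_neg hH.le, ← Real.rpow_add hH]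
    convert Real.rpow_one H using 2
    field_simp
    ring
  have hr' : (r ^ p) ^ (((p : ℝ) + 1) / p) = r ^ p * r := by
    rw [← Real.rpow_natCast r p, ← Real.rpow_mul hr, mul_div_cancel₀ _ hp', ← Nat.cast_add_one,
      Real.rpow_natCast, Real.rpow_natCast, pow_succ]
  rw [Real.mul_rpow hH.le (by positivity), ← mul_assoc, hH', hr', mul_assoc]

theorem sq_mul_sq_eq_of_sq_div_eq_mul_rpow {a b c t q : ℝ} (hb : b ≠ 0) (ht : 0 < t)
    (hq : q ≠ 0) (h : a ^ 2 / b = c * t ^ ((1 - q) / q)) :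
    a ^ 2 * t ^ 2 = b * (c * t ^ ((q + 1) / q)) := by
  have hexp : t ^ ((1 - q) / q) * t ^ 2 = t ^ ((q + 1) / q) := by
    rw [← Real.rpow_natCast t 2, ← Real.rpow_add ht]
    congr 1
    field_simp
    ring
  rw [div_eq_iff hb] at h
  rw [h, ← hexp]
  ring

section InnerProductSpace

variable {E : Type*} [NormedAddCommGroup E] [InnerProductSpace ℝ E]

theorem ConvexOn.add_inner_sub_le_of_hasGradientAt [CompleteSpace E] {S : Set E} {f : E → ℝ}
    {G x y : E} (hf : ConvexOn ℝ S f) (hx : x ∈ S) (hy : y ∈ S) (hG : HasGradientAt f G x) :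
    f x + ⟪G, y - x⟫ ≤ f y :=
  hf.add_fderiv_sub_le hx hy (hasGradientAt_iff_hasFDerivAt.mp hG)

theorem real_inner_smul_self_eq_norm_mul_norm {c : ℝ} (hc : 0 ≤ c) (d : E) :
    ⟪c • d, d⟫ = ‖c • d‖ * ‖d‖ := by
  rw [real_inner_smul_left, real_inner_self_eq_norm_mul_norm, norm_smul, Real.norm_of_nonneg hc,
    mul_assoc]

theorem neg_half_sq_mul_norm_sq_le_inner_add_half_norm_sq (a : ℝ) (s w : E) :
    -(1 / 2) * (a ^ 2 * ‖s‖ ^ 2) ≤ a * ⟪s, w⟫ + 1 / 2 * ‖w‖ ^ 2 := by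
  have hexpand := norm_add_sq_real w (a • s)
  rw [norm_smul, real_inner_smul_right, real_inner_comm, Real.norm_eq_abs, mul_pow, sq_abs]
    at hexpand
  nlinarith [sq_nonneg ‖w + a • s‖]

theorem inner_sub_lineMap_nonneg_of_forall_Icc {s x v : E} {τ : ℝ}
    (hτ : ∀ t ∈ Set.Icc (0 : ℝ) 1, (t - τ) * ⟪s, v - x⟫ ≥ 0) :
    0 ≤ ⟪s, x - (x + τ • (v - x))⟫ ∧ 0 ≤ ⟪s, v - (x + τ • (v - x))⟫ := by
  have hx : x - (x + τ • (v - x)) = (0 - τ) • (v - x) := by module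
  have hv : v - (x + τ • (v - x)) = (1 - τ) • (v - x) := by module
  rw [hx, hv, real_inner_smul_right, real_inner_smul_right]
  exact ⟨hτ 0 ⟨le_rfl, zero_le_one⟩, hτ 1 ⟨zero_le_one, le_rfl⟩⟩

theorem inner_neg_eq_of_add_norm_pow_smul_eq_zero {s d : E} {H : ℝ} (hH : 0 < H) {p : ℕ}
    (hp : 1 ≤ p) (h : s + (H * ‖d‖ ^ (p - 1)) • d = 0) :
    ⟪s, -d⟫ = (1 / H) ^ ((1 : ℝ) / p) * ‖s‖ ^ (((p : ℝ) + 1) / p) := by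
  have hc : 0 ≤ H * ‖d‖ ^ (p - 1) := by positivity
  have hs : s = -((H * ‖d‖ ^ (p - 1)) • d) := eq_neg_of_add_eq_zero_left h
  have hnorm : ‖s‖ = H * ‖d‖ ^ p := by
    rw [hs, norm_neg, norm_smul, Real.norm_of_nonneg hc, mul_assoc, ← pow_succ,
      Nat.sub_add_cancel hp]
  rw [hs, inner_neg_neg, real_inner_smul_self_eq_norm_mul_norm hc, ← norm_neg, ← hs, hnorm,
    one_div_rpow_mul_rpow_eq hH (norm_nonneg d) (by omega)]

end InnerProductSpace

theorem stmt_6_general {E : Type*} [NormedAddCommGroup E] [InnerProductSpace ℝ E]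
    [FiniteDimensional ℝ E]
    (f ψ : E → ℝ) (f' : E → E)
    (hf : ConvexOn ℝ Set.univ f)
    (hf' : ∀ x, HasGradientAt f (f' x) x)
    (p : ℕ) (hp : 1 ≤ p) (H : ℝ) (hH : 0 < H)
    (xk vk xk1 : E) (τk : ℝ)
    (g : E) (hg : ∀ y, ψ xk1 + ⟪g, y - xk1⟫ ≤ ψ y)
    (hopt : f' xk1 + g + (H * ‖xk1 - (xk + τk • (vk - xk))‖ ^ (p - 1)) •
        (xk1 - (xk + τk • (vk - xk))) = 0)
    (hτopt : ∀ τ ∈ Set.Icc (0 : ℝ) 1, (τ - τk) * ⟪f' xk1 + g, vk - xk⟫ ≥ 0)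
    (A B : ℝ) (hA : 0 ≤ A) (Ψk : E → ℝ)
    (hΨk : ∀ x, Ψk x ≥ A * (f xk + ψ xk) + B + (1 / 2) * ‖x - vk‖ ^ 2)
    (hgk : 0 < ‖f' xk1 + g‖)
    (a : ℝ) (ha : 0 < a)
    (haeq : a ^ 2 / (A + a) =
      (1 / H) ^ ((1 : ℝ) / p) * ‖f' xk1 + g‖ ^ ((1 - (p : ℝ)) / p))
    (Ψk1 : E → ℝ)
    (hΨk1 : ∀ x, Ψk1 x = Ψk x + a * (f xk1 + ⟪f' xk1, x - xk1⟫ + ψ x)) :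
    ∀ x, Ψk1 x ≥ (A + a) * (f xk1 + ψ xk1) + B +
      (1 / 2) * (1 / H) ^ ((1 : ℝ) / p) * (A + a) *
        ‖f' xk1 + g‖ ^ (((p : ℝ) + 1) / p) := by
  intro x
  set y := xk + τk • (vk - xk)
  set s := f' xk1 + g
  set κ := (1 / H) ^ ((1 : ℝ) / p) * ‖s‖ ^ (((p : ℝ) + 1) / p)
  have hκ : ⟪s, y - xk1⟫ = κ := by
    rw [← neg_sub]
    exact inner_neg_eq_of_add_norm_pow_smul_eq_zero hH hp hopt
  have hsq : a ^ 2 * ‖s‖ ^ 2 = (A + a) * κ :=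
    sq_mul_sq_eq_of_sq_div_eq_mul_rpow (by positivity) hgk (by positivity) haeq
  have hF : ∀ z, f xk1 + ψ xk1 + ⟪s, z - xk1⟫ ≤ f xk1 + ⟪f' xk1, z - xk1⟫ + ψ z := fun z => by
    linarith [(inner_add_left (f' xk1) g (z - xk1) : ⟪s, z - xk1⟫ = _), hg z]
  have hFk : f xk1 + ψ xk1 + ⟪s, xk - xk1⟫ ≤ f xk + ψ xk := by
    linarith [hF xk,
      hf.add_inner_sub_le_of_hasGradientAt (Set.mem_univ _) (Set.mem_univ _) (hf' xk1) (y := xk)]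
  have hsplit : ∀ z m w, ⟪s, z - w⟫ = ⟪s, z - m⟫ + ⟪s, m - w⟫ := fun z m w => by
    rw [← inner_add_right, sub_add_sub_cancel]
  have hk := mul_le_mul_of_nonneg_left hFk hA
  have hx := mul_le_mul_of_nonneg_left (hF x) ha.le
  rw [hsplit xk y xk1, hκ] at hk
  rw [hsplit x y xk1, hκ, hsplit x vk y] at hx
  obtain ⟨hτ₀, hτ₁⟩ := inner_sub_lineMap_nonneg_of_forall_Icc hτopt
  rw [hΨk1]
  linarith [hΨk x, mul_nonneg hA hτ₀, mul_nonneg ha.le hτ₁,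
    neg_half_sq_mul_norm_sq_le_inner_add_half_norm_sq a s (x - vk)]

theorem stmt_6 {E : Type*} [NormedAddCommGroup E] [InnerProductSpace ℝ E]
    [FiniteDimensional ℝ E]
    (f ψ : E → ℝ) (f' : E → E)
    (hf : ConvexOn ℝ Set.univ f) (hψ : ConvexOn ℝ Set.univ ψ)
    (hf' : ∀ x, HasGradientAt f (f' x) x)
    (p : ℕ) (hp : 1 ≤ p) (H : ℝ) (hH : 0 < H)
    (xk vk xk1 : E) (τk : ℝ) (hτk : τk ∈ Set.Icc (0 : ℝ) 1)
    (g : E) (hg : ∀ y, ψ xk1 + ⟪g, y - xk1⟫ ≤ ψ y)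
    (hopt : f' xk1 + g + (H * ‖xk1 - (xk + τk • (vk - xk))‖ ^ (p - 1)) •
        (xk1 - (xk + τk • (vk - xk))) = 0)
    (hτopt : ∀ τ ∈ Set.Icc (0 : ℝ) 1, (τ - τk) * ⟪f' xk1 + g, vk - xk⟫ ≥ 0)
    (A B : ℝ) (hA : 0 ≤ A) (Ψk : E → ℝ)
    (hΨk : ∀ x, Ψk x ≥ A * (f xk + ψ xk) + B + (1 / 2) * ‖x - vk‖ ^ 2)
    (hgk : 0 < ‖f' xk1 + g‖)
    (a : ℝ) (ha : 0 < a)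
    (haeq : a ^ 2 / (A + a) =
      (1 / H) ^ ((1 : ℝ) / p) * ‖f' xk1 + g‖ ^ ((1 - (p : ℝ)) / p))
    (Ψk1 : E → ℝ)
    (hΨk1 : ∀ x, Ψk1 x = Ψk x + a * (f xk1 + ⟪f' xk1, x - xk1⟫ + ψ x)) :
    ∀ x, Ψk1 x ≥ (A + a) * (f xk1 + ψ xk1) + B +
      (1 / 2) * (1 / H) ^ ((1 : ℝ) / p) * (A + a) *
        ‖f' xk1 + g‖ ^ (((p : ℝ) + 1) / p) :=
  stmt_6_general f ψ f' hf hf' p hp H hH xk vk xk1 τk g hg hopt hτopt A B hA Ψk hΨk hgk a ha haeq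
    Ψk1 hΨk1
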